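/- Location of the second singular point: assume A = Φ * Ψ in AddMonoidAlgebra ℝ ℝ with data as in the context, and L ≥ 2, K ≥ 2 (hence N ≥ 2). Then the second smallest element β₂ of the support of A equals min(ζ₁ + κ₂, ζ₂ + κ₁). -/

import Mathlib

/-!
Positive coefficients cannot cancel in the convolution `Φ * Ψ`, so its support is the whole
sumset `{ζₗ + κₖ}`; comparing with `A` this sumset is `{βₙ}`. In a sumset of two strictly
increasing sequences the smallest point is `ζ₁ + κ₁`, and any other point `ζₗ + κₖ` has `l ≥ 2`
or `k ≥ 2`, hence is at least `min (ζ₁ + κ₂) (ζ₂ + κ₁)`, a point of the sumset itself.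
-/

open Set
open scoped Pointwise

namespace AddMonoidAlgebra

variable {R G ι : Type*} [Semiring R] [Fintype ι]

theorem coeff_sum_single_apply (f : ι → G) (c : ι → R) (g : G) [DecidablePred (f · = g)] :
    (∑ i, single (f i) (c i)).coeff g = ∑ i with f i = g, c i := by
  classical
  simp only [coeff_sum, Finsupp.finsetSum_apply, coeff_single, Finsupp.single_apply,
    Finset.sum_filter]

theorem coe_support_sum_single {f : ι → G} (hf : Function.Injective f) {c : ι → R}
    (hc : ∀ i, c i ≠ 0) : ((∑ i, single (f i) (c i)).coeff.support : Set G) = range f := by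
  classical
  ext g
  simp only [Finset.mem_coe, Finsupp.mem_support_iff, coeff_sum_single_apply]
  constructor
  · intro hg
    obtain ⟨i, hi, -⟩ := Finset.exists_ne_zero_of_sum_ne_zero hg
    exact ⟨i, (Finset.mem_filter.mp hi).2⟩
  · rintro ⟨i, rfl⟩
    simpa [Finset.sum_filter, hf.eq_iff] using hc i

theorem coeff_sum_single_nonneg [PartialOrder R] [IsOrderedRing R] (f : ι → G) {c : ι → R}
    (hc : ∀ i, 0 ≤ c i) (g : G) : 0 ≤ (∑ i, single (f i) (c i)).coeff g := by
  classical
  rw [coeff_sum_single_apply]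
  exact Finset.sum_nonneg fun i _ => hc i

theorem support_coeff_mul_of_nonneg [PartialOrder R] [IsStrictOrderedRing R] [Add G]
    [DecidableEq G] {x y : R[G]} (hx : ∀ g, 0 ≤ x.coeff g) (hy : ∀ g, 0 ≤ y.coeff g) :
    (x * y).coeff.support = x.coeff.support + y.coeff.support := by
  refine (support_coeff_mul_subset x y).antisymm fun g hg => ?_
  obtain ⟨a, ha, b, hb, rfl⟩ := Finset.mem_add.mp hg
  set term : G → G → R := fun a' b' => if a' + b' = a + b then x.coeff a' * y.coeff b' else 0
  have hterm : ∀ a' b', 0 ≤ term a' b' := fun a' b' => by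
    simp only [term]; split_ifs
    exacts [mul_nonneg (hx a') (hy b'), le_rfl]
  have hpos : 0 < x.coeff a * y.coeff b :=
    mul_pos ((hx a).lt_of_ne' (Finsupp.mem_support_iff.mp ha))
      ((hy b).lt_of_ne' (Finsupp.mem_support_iff.mp hb))
  refine Finsupp.mem_support_iff.mpr (ne_of_gt ?_)
  calc 0 < term a b := by simpa only [term, if_pos rfl] using hpos
    _ ≤ ∑ b' ∈ y.coeff.support, term a b' :=
      Finset.single_le_sum (fun b' _ => hterm a b') hb
    _ ≤ ∑ a' ∈ x.coeff.support, ∑ b' ∈ y.coeff.support, term a' b' :=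
      Finset.single_le_sum (f := fun a' => ∑ b' ∈ y.coeff.support, term a' b')
        (fun a' _ => Finset.sum_nonneg fun b' _ => hterm a' b') ha
    _ = (x * y).coeff (a + b) := (coeff_mul x y (a + b)).symm

end AddMonoidAlgebra

theorem Fin.mk_one_le_of_ne_mk_zero {N : ℕ} {i : Fin N} (h : 1 < N) (hi : i ≠ ⟨0, by omega⟩) :
    (⟨1, h⟩ : Fin N) ≤ i :=
  Nat.one_le_iff_ne_zero.mpr (Fin.val_ne_of_ne hi)

section FinOrder

variable {α : Type*} {N L K : ℕ}

theorem Monotone.isLeast_range_fin_zero [Preorder α] {β : Fin N → α} (hβ : Monotone β)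
    (h : 0 < N) : IsLeast (range β) (β ⟨0, h⟩) :=
  ⟨mem_range_self _, forall_mem_range.mpr fun _ => hβ (Nat.zero_le _)⟩

theorem StrictMono.isLeast_range_diff_fin_one [LinearOrder α] {β : Fin N → α}
    (hβ : StrictMono β) (h : 1 < N) :
    IsLeast (range β \ {β ⟨0, by omega⟩}) (β ⟨1, h⟩) := by
  refine ⟨⟨mem_range_self _, fun h01 => ?_⟩, ?_⟩
  · exact absurd (hβ.injective h01) (by simp [Fin.ext_iff])
  · rintro _ ⟨⟨i, rfl⟩, hi⟩
    exact hβ.monotone (Fin.mk_one_le_of_ne_mk_zero h fun h0 => hi (congrArg β h0))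

variable [AddCommMonoid α] [LinearOrder α] {ζ : Fin L → α} {κ : Fin K → α}

theorem isLeast_range_add_range_fin_zero [IsOrderedAddMonoid α] (hζ : Monotone ζ)
    (hκ : Monotone κ) (hL : 0 < L) (hK : 0 < K) :
    IsLeast (range ζ + range κ) (ζ ⟨0, hL⟩ + κ ⟨0, hK⟩) := by
  refine ⟨add_mem_add (mem_range_self _) (mem_range_self _), ?_⟩
  rintro _ ⟨_, ⟨l, rfl⟩, _, ⟨k, rfl⟩, rfl⟩
  exact add_le_add (hζ (Nat.zero_le _)) (hκ (Nat.zero_le _))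

theorem isLeast_range_add_range_diff_fin_zero [IsOrderedCancelAddMonoid α] (hζ : StrictMono ζ)
    (hκ : StrictMono κ) (hL : 1 < L) (hK : 1 < K) :
    IsLeast ((range ζ + range κ) \ {ζ ⟨0, by omega⟩ + κ ⟨0, by omega⟩})
      (min (ζ ⟨0, by omega⟩ + κ ⟨1, hK⟩) (ζ ⟨1, hL⟩ + κ ⟨0, by omega⟩)) := by
  have hζ01 : ζ ⟨0, by omega⟩ < ζ ⟨1, hL⟩ := hζ Nat.zero_lt_one
  have hκ01 : κ ⟨0, by omega⟩ < κ ⟨1, hK⟩ := hκ Nat.zero_lt_one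
  refine ⟨?_, ?_⟩
  · rcases min_choice (ζ ⟨0, by omega⟩ + κ ⟨1, hK⟩) (ζ ⟨1, hL⟩ + κ ⟨0, by omega⟩) with h | h <;>
      rw [h] <;> refine ⟨add_mem_add (mem_range_self _) (mem_range_self _), ?_⟩
    · exact (add_lt_add_right hκ01 _).ne'
    · exact (add_lt_add_left hζ01 _).ne'
  · rintro _ ⟨⟨_, ⟨l, rfl⟩, _, ⟨k, rfl⟩, rfl⟩, hlk⟩
    by_cases hl : l = ⟨0, by omega⟩
    · subst hl
      have hk : k ≠ ⟨0, by omega⟩ := by rintro rfl; exact hlk rfl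
      exact (min_le_left _ _).trans
        (add_le_add_right (hκ.monotone (Fin.mk_one_le_of_ne_mk_zero hK hk)) _)
    · exact (min_le_right _ _).trans (add_le_add
        (hζ.monotone (Fin.mk_one_le_of_ne_mk_zero hL hl)) (hκ.monotone (Nat.zero_le _)))

end FinOrder

/-- Location of the second singular point: if `A = Φ * Ψ` with the leaf-peeling
singular data and `L ≥ 2`, `K ≥ 2` (hence `N ≥ 2`), then the second smallest
singular point satisfies `β₂ = min (ζ₁ + κ₂) (ζ₂ + κ₁)`. -/
theorem second_singular_point_location
    (N L K : ℕ) (hN : 2 ≤ N) (hL : 2 ≤ L) (hK : 2 ≤ K)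
    (β : Fin N → ℝ) (ζ : Fin L → ℝ) (κ : Fin K → ℝ)
    (hβ : StrictMono β) (hζ : StrictMono ζ) (hκ : StrictMono κ)
    (α : Fin N → ℝ) (φ : Fin L → ℝ) (ψ : Fin K → ℝ)
    (hα : ∀ n, α n ≠ 0) (hφ : ∀ l, 0 < φ l) (hψ : ∀ k, 0 < ψ k)
    (A Φ Ψ : AddMonoidAlgebra ℝ ℝ)
    (hA : A = ∑ n, AddMonoidAlgebra.single (β n) (α n))
    (hΦ : Φ = ∑ l, AddMonoidAlgebra.single (ζ l) (φ l))
    (hΨ : Ψ = ∑ k, AddMonoidAlgebra.single (κ k) (ψ k))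
    (hSing : A = Φ * Ψ) :
    β ⟨1, hN⟩ = min (ζ ⟨0, by omega⟩ + κ ⟨1, hK⟩) (ζ ⟨1, hL⟩ + κ ⟨0, by omega⟩) := by
  have hrange : range β = range ζ + range κ := by
    rw [← AddMonoidAlgebra.coe_support_sum_single hβ.injective hα, ← hA, hSing,
      AddMonoidAlgebra.support_coeff_mul_of_nonneg
        (hΦ ▸ AddMonoidAlgebra.coeff_sum_single_nonneg ζ fun l => (hφ l).le)
        (hΨ ▸ AddMonoidAlgebra.coeff_sum_single_nonneg κ fun k => (hψ k).le),
      Finset.coe_add, hΦ, hΨ, AddMonoidAlgebra.coe_support_sum_single hζ.injective fun l => (hφ l).ne',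
      AddMonoidAlgebra.coe_support_sum_single hκ.injective fun k => (hψ k).ne']
  have hβ₀ : β ⟨0, by omega⟩ = ζ ⟨0, by omega⟩ + κ ⟨0, by omega⟩ :=
    (hβ.monotone.isLeast_range_fin_zero _).unique
      (hrange ▸ isLeast_range_add_range_fin_zero hζ.monotone hκ.monotone _ _)
  refine (hβ.isLeast_range_diff_fin_one hN).unique ?_
  rw [hrange, hβ₀]
  exact isLeast_range_add_range_diff_fin_zero hζ hκ hL hK
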